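/- arXiv:1501.00401 — 2 statements merged into one kernel-verified Lean document; each statement's English description precedes it below -/
import Mathlib

section
/- Let P be a monoid isomorphic to C ∩ Λ for a lattice Λ and rational polyhedral cone C ⊆ Λ_ℝ (i.e. P is weakly toric). Then every face F of the monoid P is of the form α^{-1}(0) = {p ∈ P : α(p) = 0} for some monoid morphism α : P → ℕ; conversely every such α^{-1}(0) is a face of P. -/
/-- A face of a commutative monoid: a submonoid `F` such that `p + q ∈ F`
implies `p ∈ F` and `q ∈ F`. -/
def IsFace {M : Type*} [AddCommMonoid M] (F : Set M) : Prop :=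
  0 ∈ F ∧ (∀ p q : M, p ∈ F → q ∈ F → p + q ∈ F) ∧
    ∀ p q : M, p + q ∈ F → p ∈ F ∧ q ∈ F

/-- An ideal of a commutative monoid: a proper subset closed under adding
arbitrary elements of the monoid. -/
def IsIdeal {M : Type*} [AddCommMonoid M] (I : Set M) : Prop :=
  I ≠ Set.univ ∧ ∀ p i : M, i ∈ I → p + i ∈ I

/-- A prime ideal of a commutative monoid. -/
def IsPrimeIdeal {M : Type*} [AddCommMonoid M] (I : Set M) : Prop :=
  IsIdeal I ∧ ∀ p q : M, p + q ∈ I → p ∈ I ∨ q ∈ I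

/-- Let `P = C ∩ Λ` be a weakly toric monoid, realised as the submonoid `S` of
the lattice `Λ = ℤ^k` consisting of lattice points of a rational polyhedral
cone cut out by integral linear functionals `a i`.  Then the faces of `P` are
exactly the subsets `α⁻¹(0)` for monoid morphisms `α : P → ℕ`. -/
theorem faces_eq_vanishing_of_dual {k m : ℕ} (a : Fin m → Fin k → ℤ)
    (S : AddSubmonoid (Fin k → ℤ))
    (hS : ∀ v, v ∈ S ↔ ∀ i, 0 ≤ ∑ j, a i j * v j) :
    ∀ F : Set S, IsFace F ↔ ∃ α : S →+ ℕ, F = {p : S | α p = 0} := by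
  classical
  -- the linear functionals as additive monoid homs
  set L : Fin m → ((Fin k → ℤ) →+ ℤ) := fun i =>
    AddMonoidHom.mk' (fun v => ∑ j, a i j * v j)
      (by intro u v; simp [Pi.add_apply, mul_add, Finset.sum_add_distrib]) with hL
  have hLapp : ∀ i v, L i v = ∑ j, a i j * v j := fun i v => rfl
  -- restricted to S
  set M : Fin m → (S →+ ℤ) := fun i => (L i).comp S.subtype with hM
  have hMapp : ∀ i (p : S), M i p = L i (p : Fin k → ℤ) := fun i p => rfl
  have hMem : ∀ v, v ∈ S ↔ ∀ i, 0 ≤ L i v := by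
    intro v; rw [hS v]; rfl
  have Mnn : ∀ (p : S) i, 0 ≤ M i p := fun p i => (hMem p).1 p.2 i
  intro F
  constructor
  · rintro ⟨hF0, hFadd, hFsplit⟩
    set T : Finset (Fin m) :=
      Finset.univ.filter (fun i => ∀ f : S, f ∈ F → M i f = 0) with hT
    have key : ∀ p : S, p ∈ F ↔ ∀ i ∈ T, M i p = 0 := by
      intro p
      constructor
      · intro hp i hi
        exact (Finset.mem_filter.1 hi).2 p hp
      · intro hp
        have hex : ∀ i : Fin m, i ∉ T → ∃ f : S, f ∈ F ∧ 0 < M i f := by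
          intro i hi
          simp only [hT, Finset.mem_filter, Finset.mem_univ, true_and, not_forall] at hi
          obtain ⟨f, hf, hne⟩ := hi
          exact ⟨f, hf, lt_of_le_of_ne (Mnn f i) (Ne.symm hne)⟩
        choose g hg using hex
        set G : Fin m → S := fun i => if h : i ∈ T then 0 else g i h with hG
        have hGF : ∀ i, G i ∈ F := by
          intro i
          by_cases h : i ∈ T
          · simp [hG, h, hF0]
          · simp only [hG, dif_neg h]
            exact (hg i h).1
        set f : S := ∑ i, G i with hf
        have hfF : f ∈ F :=
          Finset.sum_induction G (· ∈ F) (fun a b ha hb => hFadd a b ha hb) hF0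
            (fun i _ => hGF i)
        have hfT : ∀ i ∈ T, M i f = 0 := fun i hi => (Finset.mem_filter.1 hi).2 f hfF
        have hfpos : ∀ i, i ∉ T → 1 ≤ M i f := by
          intro i hi
          have hsum : M i f = ∑ j, M i (G j) := by rw [hf, map_sum]
          have hGi : M i (G i) = M i (g i hi) := by simp [hG, hi]
          have h1 : 1 ≤ M i (G i) := by rw [hGi]; exact (hg i hi).2
          calc (1 : ℤ) ≤ M i (G i) := h1
            _ ≤ ∑ j, M i (G j) :=
              Finset.single_le_sum (fun j _ => Mnn (G j) i) (Finset.mem_univ i)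
            _ = M i f := hsum.symm
        set n : ℕ := Finset.univ.sup (fun i => (M i p).toNat) with hn
        have hnp : ∀ i, M i p ≤ (n : ℤ) := by
          intro i
          have h1 : (M i p).toNat ≤ n := Finset.le_sup (f := fun i => (M i p).toNat) (Finset.mem_univ i)
          calc M i p ≤ ((M i p).toNat : ℤ) := Int.self_le_toNat _
            _ ≤ (n : ℤ) := by exact_mod_cast h1
        have hq : (n • (f : Fin k → ℤ) - (p : Fin k → ℤ)) ∈ S := by
          rw [hMem]
          intro i
          rw [map_sub, map_nsmul]
          by_cases hi : i ∈ T
          · have h1 : L i (f : Fin k → ℤ) = 0 := hfT i hi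
            have h2 : L i (p : Fin k → ℤ) = 0 := hp i hi
            rw [h1, h2]; simp
          · have h1 : (1 : ℤ) ≤ L i (f : Fin k → ℤ) := hfpos i hi
            have h2 : L i (p : Fin k → ℤ) ≤ (n : ℤ) := hnp i
            have h3 : (n : ℤ) ≤ n • L i (f : Fin k → ℤ) := by
              rw [nsmul_eq_mul]
              calc (n : ℤ) = n * 1 := by ring
                _ ≤ n * L i (f : Fin k → ℤ) := by
                    apply mul_le_mul_of_nonneg_left h1 (by positivity)
            omega
        set Q : S := ⟨n • (f : Fin k → ℤ) - (p : Fin k → ℤ), hq⟩ with hQ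
        have hpQ : p + Q = n • f := by
          apply Subtype.ext
          push_cast [hQ]
          ring
        have hns : ∀ N : ℕ, (N • f) ∈ F := by
          intro N
          induction N with
          | zero => simpa using hF0
          | succ N ih => rw [succ_nsmul]; exact hFadd _ _ ih hfF
        exact (hFsplit p Q (by rw [hpQ]; exact hns n)).1
    -- build α
    have hadd : ∀ p q : S,
        (∑ i ∈ T, M i (p + q)).toNat = (∑ i ∈ T, M i p).toNat + (∑ i ∈ T, M i q).toNat := by
      intro p q
      have h1 : ∑ i ∈ T, M i (p + q) = (∑ i ∈ T, M i p) + (∑ i ∈ T, M i q) := by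
        simp [map_add, Finset.sum_add_distrib]
      rw [h1, Int.toNat_add (Finset.sum_nonneg fun i _ => Mnn p i)
        (Finset.sum_nonneg fun i _ => Mnn q i)]
    refine ⟨{ toFun := fun p => (∑ i ∈ T, M i p).toNat,
              map_zero' := by simp, map_add' := hadd }, ?_⟩
    ext p
    simp only [Set.mem_setOf_eq, AddMonoidHom.coe_mk, ZeroHom.coe_mk]
    rw [key p]
    have hnn : ∀ i ∈ T, 0 ≤ M i p := fun i _ => Mnn p i
    constructor
    · intro h
      rw [Finset.sum_eq_zero h]
      rfl
    · intro h
      have h0 : ∑ i ∈ T, M i p = 0 := by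
        have := Int.toNat_eq_zero.1 h
        have h2 := Finset.sum_nonneg hnn
        omega
      exact (Finset.sum_eq_zero_iff_of_nonneg hnn).1 h0
  · rintro ⟨α, rfl⟩
    refine ⟨by simp, ?_, ?_⟩
    · intro p q hp hq
      simp only [Set.mem_setOf_eq, map_add] at *
      omega
    · intro p q hpq
      simp only [Set.mem_setOf_eq, map_add] at *
      omega
end

section
/- Let P = {(a,b,c) ∈ ℤ^3 : a ≥ 0, b ≥ 0, a + b ≥ c ≥ 0}. Then P is a submonoid of ℤ^3 generated by the four elements p_1 = (1,0,0), p_2 = (0,1,1), p_3 = (0,1,0), p_4 = (1,0,1), which satisfy the relation p_1 + p_2 = p_3 + p_4; moreover, the induced map from monoid morphisms x : P → ([0,∞),·) to [0,∞)^4, x ↦ (x(p_1), x(p_2), x(p_3), x(p_4)), is a bijection onto {(x_1,x_2,x_3,x_4) ∈ [0,∞)^4 : x_1 x_2 = x_3 x_4}. -/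
open NNReal

/-- The subset `P = {(a,b,c) ∈ ℤ³ : a ≥ 0, b ≥ 0, a + b ≥ c ≥ 0}`. -/
def Pcar : Set (ℤ × ℤ × ℤ) :=
  {v | 0 ≤ v.1 ∧ 0 ≤ v.2.1 ∧ 0 ≤ v.2.2 ∧ v.2.2 ≤ v.1 + v.2.1}

/-- `P` is a submonoid of `ℤ³`. -/
def Pmon : AddSubmonoid (ℤ × ℤ × ℤ) where
  carrier := Pcar
  zero_mem' := by simp [Pcar]
  add_mem' := by
    intro u v hu hv
    simp only [Pcar, Set.mem_setOf_eq, Prod.fst_add, Prod.snd_add] at *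
    omega

def q1 : Pmon := ⟨(1, 0, 0), by simp [Pmon, Pcar]⟩
def q2 : Pmon := ⟨(0, 1, 1), by simp [Pmon, Pcar]⟩
def q3 : Pmon := ⟨(0, 1, 0), by simp [Pmon, Pcar]⟩
def q4 : Pmon := ⟨(1, 0, 1), by simp [Pmon, Pcar]⟩

/-- A monoid morphism from `P` to `([0,∞), ·)`. -/
def IsMonHom (f : Pmon → ℝ≥0) : Prop :=
  f 0 = 1 ∧ ∀ p q : Pmon, f (p + q) = f p * f q


lemma mem_Pcar (p : Pmon) :
    0 ≤ (p : ℤ × ℤ × ℤ).1 ∧ 0 ≤ (p : ℤ × ℤ × ℤ).2.1 ∧ 0 ≤ (p : ℤ × ℤ × ℤ).2.2 ∧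
      (p : ℤ × ℤ × ℤ).2.2 ≤ (p : ℤ × ℤ × ℤ).1 + (p : ℤ × ℤ × ℤ).2.1 := p.2

lemma decomp_vec (v : ℤ × ℤ × ℤ) (hv : v ∈ Pmon) : ∃ a b c d : ℕ,
    v = a • ((1, 0, 0) : ℤ × ℤ × ℤ) + b • ((0, 1, 1) : ℤ × ℤ × ℤ) +
        c • ((0, 1, 0) : ℤ × ℤ × ℤ) + d • ((1, 0, 1) : ℤ × ℤ × ℤ) := by
  obtain ⟨h1, h2, h3, h4⟩ := hv
  refine ⟨(v.1 - min v.2.2 v.1).toNat, (v.2.2 - min v.2.2 v.1).toNat,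
    (v.2.1 - (v.2.2 - min v.2.2 v.1)).toNat, (min v.2.2 v.1).toNat, ?_⟩
  obtain ⟨a, b, c⟩ := v
  simp only [Prod.smul_mk, nsmul_eq_mul, mul_one, mul_zero, Prod.mk_add_mk, Prod.ext_iff] at *
  omega

lemma decomp (p : Pmon) : ∃ a b c d : ℕ, p = a • q1 + b • q2 + c • q3 + d • q4 := by
  obtain ⟨a, b, c, d, h⟩ := decomp_vec p.1 p.2
  exact ⟨a, b, c, d, Subtype.ext (by simpa [q1, q2, q3, q4] using h)⟩

lemma hom_pow {f : Pmon → ℝ≥0} (hf : IsMonHom f) (p : Pmon) (n : ℕ) :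
    f (n • p) = f p ^ n := by
  induction n with
  | zero => simpa using hf.1
  | succ n ih => rw [succ_nsmul, hf.2, ih, pow_succ]

lemma uniq (f g : Pmon → ℝ≥0) (hf : IsMonHom f) (hg : IsMonHom g)
    (h1 : f q1 = g q1) (h2 : f q2 = g q2) (h3 : f q3 = g q3) (h4 : f q4 = g q4) : f = g := by
  funext p
  obtain ⟨a, b, c, d, h⟩ := decomp p
  rw [h, hf.2, hf.2, hf.2, hg.2, hg.2, hg.2, hom_pow hf, hom_pow hf, hom_pow hf, hom_pow hf,
    hom_pow hg, hom_pow hg, hom_pow hg, hom_pow hg, h1, h2, h3, h4]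

lemma exist (t1 t2 t3 t4 : ℝ≥0) (ht : t1 * t2 = t3 * t4) :
    ∃ f : Pmon → ℝ≥0, IsMonHom f ∧ f q1 = t1 ∧ f q2 = t2 ∧ f q3 = t3 ∧ f q4 = t4 := by
  by_cases h3 : t3 = 0
  · have h12 : t1 = 0 ∨ t2 = 0 := by
      rw [← mul_eq_zero, ht, h3, zero_mul]
    rcases h12 with h1 | h2
    · -- t1 = 0, t3 = 0
      refine ⟨fun p => if (p : ℤ × ℤ × ℤ).2.2 = (p : ℤ × ℤ × ℤ).1 + (p : ℤ × ℤ × ℤ).2.1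
          then t2 ^ ((p : ℤ × ℤ × ℤ).2.1).toNat * t4 ^ ((p : ℤ × ℤ × ℤ).1).toNat else 0,
        ⟨?_, ?_⟩, ?_, ?_, ?_, ?_⟩
      · simp
      · intro p q
        have hp := mem_Pcar p; have hq := mem_Pcar q
        have hadd1 : ((p + q : Pmon) : ℤ × ℤ × ℤ).1 = (p : ℤ × ℤ × ℤ).1 + (q : ℤ × ℤ × ℤ).1 := rfl
        have hadd2 : ((p + q : Pmon) : ℤ × ℤ × ℤ).2.1 = (p : ℤ × ℤ × ℤ).2.1 + (q : ℤ × ℤ × ℤ).2.1 := rfl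
        have hadd3 : ((p + q : Pmon) : ℤ × ℤ × ℤ).2.2 = (p : ℤ × ℤ × ℤ).2.2 + (q : ℤ × ℤ × ℤ).2.2 := rfl
        beta_reduce
        rw [hadd1, hadd2, hadd3]
        split_ifs with hpq hP hQ hQ hP hQ hQ
        · rw [Int.toNat_add hp.2.1 hq.2.1, Int.toNat_add hp.1 hq.1, pow_add, pow_add]
          ring
        all_goals first | omega | (simp_all; omega) | simp_all
      · simp [q1, h1]
      · simp [q2]
      · simp [q3, h3]
      · simp [q4]
    · -- t2 = 0, t3 = 0
      refine ⟨fun p => if (p : ℤ × ℤ × ℤ).2.1 = 0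
          then t1 ^ ((p : ℤ × ℤ × ℤ).1 - (p : ℤ × ℤ × ℤ).2.2).toNat *
               t4 ^ ((p : ℤ × ℤ × ℤ).2.2).toNat else 0,
        ⟨?_, ?_⟩, ?_, ?_, ?_, ?_⟩
      · simp
      · intro p q
        have hp := mem_Pcar p; have hq := mem_Pcar q
        have hadd1 : ((p + q : Pmon) : ℤ × ℤ × ℤ).1 = (p : ℤ × ℤ × ℤ).1 + (q : ℤ × ℤ × ℤ).1 := rfl
        have hadd2 : ((p + q : Pmon) : ℤ × ℤ × ℤ).2.1 = (p : ℤ × ℤ × ℤ).2.1 + (q : ℤ × ℤ × ℤ).2.1 := rfl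
        have hadd3 : ((p + q : Pmon) : ℤ × ℤ × ℤ).2.2 = (p : ℤ × ℤ × ℤ).2.2 + (q : ℤ × ℤ × ℤ).2.2 := rfl
        beta_reduce
        rw [hadd1, hadd2, hadd3]
        split_ifs with hpq hP hQ hQ hP hQ hQ
        · have e1 : ((p : ℤ × ℤ × ℤ).1 + (q : ℤ × ℤ × ℤ).1 -
              ((p : ℤ × ℤ × ℤ).2.2 + (q : ℤ × ℤ × ℤ).2.2)).toNat =
              ((p : ℤ × ℤ × ℤ).1 - (p : ℤ × ℤ × ℤ).2.2).toNat +
              ((q : ℤ × ℤ × ℤ).1 - (q : ℤ × ℤ × ℤ).2.2).toNat := by omega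
          rw [e1, Int.toNat_add hp.2.2.1 hq.2.2.1, pow_add, pow_add]
          ring
        all_goals first | omega | (simp_all; omega) | simp_all
      · simp [q1]
      · simp [q2, h2]
      · simp [q3, h3]
      · simp [q4]
  · -- t3 ≠ 0
    refine ⟨fun p => t1 ^ ((p : ℤ × ℤ × ℤ).1).toNat * t3 ^ ((p : ℤ × ℤ × ℤ).2.1).toNat *
        (t2 / t3) ^ ((p : ℤ × ℤ × ℤ).2.2).toNat, ⟨?_, ?_⟩, ?_, ?_, ?_, ?_⟩
    · simp
    · intro p q
      have hp := mem_Pcar p; have hq := mem_Pcar q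
      have hadd1 : ((p + q : Pmon) : ℤ × ℤ × ℤ).1 = (p : ℤ × ℤ × ℤ).1 + (q : ℤ × ℤ × ℤ).1 := rfl
      have hadd2 : ((p + q : Pmon) : ℤ × ℤ × ℤ).2.1 = (p : ℤ × ℤ × ℤ).2.1 + (q : ℤ × ℤ × ℤ).2.1 := rfl
      have hadd3 : ((p + q : Pmon) : ℤ × ℤ × ℤ).2.2 = (p : ℤ × ℤ × ℤ).2.2 + (q : ℤ × ℤ × ℤ).2.2 := rfl
      beta_reduce
      rw [hadd1, hadd2, hadd3, Int.toNat_add hp.1 hq.1, Int.toNat_add hp.2.1 hq.2.1,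
        Int.toNat_add hp.2.2.1 hq.2.2.1, pow_add, pow_add, pow_add]
      ring
    · simp [q1]
    · simp only [q2]
      norm_num
      rw [mul_comm, div_mul_cancel₀ _ h3]
    · simp [q3]
    · simp only [q4]
      norm_num
      rw [mul_div_assoc', ht, mul_comm t3 t4, mul_div_assoc, div_self h3, mul_one]

/-- `P = {(a,b,c) ∈ ℤ³ : a,b ≥ 0, a + b ≥ c ≥ 0}` is a submonoid of `ℤ³`
generated by `p₁ = (1,0,0)`, `p₂ = (0,1,1)`, `p₃ = (0,1,0)`, `p₄ = (1,0,1)`,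
which satisfy the single relation `p₁ + p₂ = p₃ + p₄`; moreover the map
`x ↦ (x(p₁), x(p₂), x(p₃), x(p₄))` is a bijection from monoid morphisms
`x : P → ([0,∞),·)` onto `{(x₁,x₂,x₃,x₄) ∈ [0,∞)⁴ : x₁x₂ = x₃x₄}`. -/
theorem XP_pyramid :
    (∀ v ∈ Pmon, ∃ a b c d : ℕ,
      v = a • ((1, 0, 0) : ℤ × ℤ × ℤ) + b • ((0, 1, 1) : ℤ × ℤ × ℤ) +
          c • ((0, 1, 0) : ℤ × ℤ × ℤ) + d • ((1, 0, 1) : ℤ × ℤ × ℤ)) ∧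
    (q1 + q2 = q3 + q4) ∧
    (∀ f : Pmon → ℝ≥0, IsMonHom f → f q1 * f q2 = f q3 * f q4) ∧
    (∀ f g : Pmon → ℝ≥0, IsMonHom f → IsMonHom g →
      f q1 = g q1 → f q2 = g q2 → f q3 = g q3 → f q4 = g q4 → f = g) ∧
    (∀ t1 t2 t3 t4 : ℝ≥0, t1 * t2 = t3 * t4 →
      ∃ f : Pmon → ℝ≥0, IsMonHom f ∧
        f q1 = t1 ∧ f q2 = t2 ∧ f q3 = t3 ∧ f q4 = t4) := by
  refine ⟨decomp_vec, Subtype.ext rfl, ?_, uniq, exist⟩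
  intro f hf
  rw [← hf.2, ← hf.2, show q1 + q2 = q3 + q4 from Subtype.ext rfl]
end
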